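/- There is no universal extended spiking neural P system without delay that has only 2 neurons, even with generalised input and generalised output. -/

import Mathlib

/-!
In a system with two neurons every synapse leads to the other neuron, and a firing rule emits
at most as many spikes as it consumes, so the number of spikes in the system plus the length of
the unread input never increases. On input `w` a computation therefore only visits states
(spike counts, unread input, number of emissions of `x` spikes capped at `2`) from a finite set
whose size is a primitive recursive function of `w`, and cutting out loops shows that two
emissions of `x` spikes happen in some computation iff they happen within that many steps.
A breadth-first search up to this bound decides whether the system has an output on `w`; it is
primitive recursive because languages over a one-letter alphabet given by regular expressions
are. A universal system would thus decide the halting problem.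
-/

open scoped Classical

namespace PaperSNP

/-- A firing rule `E / s^b → s^p` over the unary spike alphabet. -/
structure FireRule where
  E : RegularExpression Unit
  b : ℕ
  p : ℕ

/-- The word consisting of `n` spikes. -/
def spk (n : ℕ) : List Unit := List.replicate n ()

/-- An (extended) spiking neural P system without delay, with `m` neurons.
Neuron `i` initially holds `init i` spikes, has firing rules `fire i` and
forgetting rules `forget i` (a forgetting rule is given by the number `e`
of spikes it removes). -/
structure SNP (m : ℕ) where
  syn : Finset (Fin m × Fin m)
  inp : Fin m
  out : Fin m
  init : Fin m → ℕ
  fire : Fin m → Set FireRule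
  forget : Fin m → Set ℕ

/-- Well-formedness: synapses join distinct neurons, rule sets are finite,
every firing rule `E/s^b → s^p` has `b ≥ p ≥ 1`, and every forgetting rule
`s^e → λ` has `e ≥ 1` with `s^e ∉ L(E)` for each firing rule of the neuron. -/
def SNP.WF {m : ℕ} (P : SNP m) : Prop :=
  (∀ e ∈ P.syn, e.1 ≠ e.2) ∧
  (∀ i, (P.fire i).Finite) ∧ (∀ i, (P.forget i).Finite) ∧
  (∀ i, ∀ r ∈ P.fire i, 1 ≤ r.p ∧ r.p ≤ r.b) ∧
  (∀ i, ∀ e ∈ P.forget i, 1 ≤ e ∧ ∀ r ∈ P.fire i, spk e ∉ r.E.matches')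

/-- A standard system: every firing rule emits exactly one spike. -/
def SNP.Standard {m : ℕ} (P : SNP m) : Prop :=
  ∀ i, ∀ r ∈ P.fire i, r.p = 1

/-- A configuration: spike counts of the neurons and the unread input suffix. -/
structure Config (m : ℕ) where
  sp : Fin m → ℕ
  w : List Bool

/-- An action of a single neuron at a timestep: apply a firing rule,
apply a forgetting rule (removing `e` spikes), or do nothing. -/
abbrev Act := Option (FireRule ⊕ ℕ)

/-- Applicability of a firing rule in neuron `i` holding `c` spikes. -/
def FireApp {m : ℕ} (P : SNP m) (i : Fin m) (r : FireRule) (c : ℕ) : Prop :=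
  r ∈ P.fire i ∧ r.b ≤ c ∧ spk c ∈ r.E.matches'

/-- Applicability of a forgetting rule `s^e → λ` in neuron `i` holding `c` spikes. -/
def ForgetApp {m : ℕ} (P : SNP m) (i : Fin m) (e : ℕ) (c : ℕ) : Prop :=
  e ∈ P.forget i ∧ c = e

/-- An action is valid for neuron `i` holding `c` spikes: a rule may (and must)
be applied exactly when some rule is applicable. -/
def ActValid {m : ℕ} (P : SNP m) (i : Fin m) (c : ℕ) : Act → Prop
  | none => (∀ r, ¬ FireApp P i r c) ∧ (∀ e, ¬ ForgetApp P i e c)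
  | some (Sum.inl r) => FireApp P i r c
  | some (Sum.inr e) => ForgetApp P i e c

/-- Number of spikes consumed by an action. -/
def consumed : Act → ℕ
  | none => 0
  | some (Sum.inl r) => r.b
  | some (Sum.inr e) => e

/-- Number of spikes emitted along each outgoing synapse by an action. -/
def emitted : Act → ℕ
  | some (Sum.inl r) => r.p
  | some (Sum.inr _) => 0
  | none => 0

/-- Spikes received by neuron `i` from the other neurons, given the actions. -/
def received {m : ℕ} (P : SNP m) (a : Fin m → Act) (i : Fin m) : ℕ :=
  ∑ j : Fin m, if (j, i) ∈ P.syn then emitted (a j) else 0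

/-- The spike entering the input neuron from the environment (1 iff the
currently read input symbol is a 1). -/
def inputSpike {m : ℕ} (P : SNP m) (w : List Bool) (i : Fin m) : ℕ :=
  if i = P.inp ∧ w.head? = some true then 1 else 0

/-- One synchronous computation step of the system under actions `a`. -/
def SStep {m : ℕ} (P : SNP m) (a : Fin m → Act) (c c' : Config m) : Prop :=
  (∀ i, ActValid P i (c.sp i) (a i)) ∧
  (∀ i, c'.sp i = c.sp i - consumed (a i) + received P a i + inputSpike P c.w i) ∧
  c'.w = c.w.tail

/-- Initial configuration on input word `w`. -/
def SNP.initConfig {m : ℕ} (P : SNP m) (w : List Bool) : Config m := ⟨P.init, w⟩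

/-- A computation (run) of the system on input word `w`. -/
structure Run {m : ℕ} (P : SNP m) (w : List Bool) where
  cfg : ℕ → Config m
  act : ℕ → Fin m → Act
  init_eq : cfg 0 = P.initConfig w
  step : ∀ t, SStep P (act t) (cfg t) (cfg (t + 1))

/-- The output neuron fires at timestep `t` of the run. -/
def FiresAt {m : ℕ} {P : SNP m} {w : List Bool} (ρ : Run P w) (t : ℕ) : Prop :=
  ∃ r : FireRule, ρ.act t P.out = some (Sum.inl r)

/-- Exactly `x` spikes are sent out of the output neuron at timestep `t`. -/
def SendsAt {m : ℕ} {P : SNP m} {w : List Bool} (ρ : Run P w) (t x : ℕ) : Prop :=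
  ∃ r : FireRule, ρ.act t P.out = some (Sum.inl r) ∧ r.p = x

/-- `t1 < t2` are the first two timesteps at which the event `F` happens and
`z = t2 - t1` (the output value). -/
def OutputIs (F : ℕ → Prop) (z : ℕ) : Prop :=
  ∃ t1 t2, t1 < t2 ∧ F t1 ∧ F t2 ∧ (∀ s, s < t2 → s ≠ t1 → ¬ F s) ∧ z = t2 - t1

/-- As `OutputIs`, with moreover the second event occurring by timestep `T`
(the whole computation takes at most `T` timesteps). -/
def OutWithin (F : ℕ → Prop) (z T : ℕ) : Prop :=
  ∃ t1 t2, t1 < t2 ∧ F t1 ∧ F t2 ∧ (∀ s, s < t2 → s ≠ t1 → ¬ F s) ∧ z = t2 - t1 ∧ t2 ≤ T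

/-- The system outputs `z` on input `w` (standard output convention: `z` is the
number of timesteps between the first and second firings of the output neuron). -/
def Outputs {m : ℕ} (P : SNP m) (w : List Bool) (z : ℕ) : Prop :=
  ∃ ρ : Run P w, OutputIs (FiresAt ρ) z

/-- Generalised output with constant `x`: `z` is the number of timesteps between
the first and second timesteps at which exactly `x` spikes leave the output neuron. -/
def GenOutputs {m : ℕ} (P : SNP m) (x : ℕ) (w : List Bool) (z : ℕ) : Prop :=
  ∃ ρ : Run P w, OutputIs (fun t => SendsAt ρ t x) z

/-- `phi x v`: the `x`-th partial recursive function of a fixed Gödel enumeration,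
applied to the (encoded) tuple `v` of natural numbers. -/
def phi (x : ℕ) (v : List ℕ) : Part ℕ :=
  Nat.Partrec.Code.eval (Denumerable.ofNat Nat.Partrec.Code x) (Encodable.encode v)

/-- Universality of a system `P` with respect to an output convention `Out`:
there are recursive (computable) functions `f` and `g` such that for all `x` and
all argument tuples `v`, `phi x v = f (P(g(x, v)))`, the two sides being defined
together. -/
def UniversalVia {m : ℕ} (P : SNP m) (Out : List Bool → ℕ → Prop) : Prop :=
  ∃ (f : ℕ → ℕ) (g : ℕ × List ℕ → List Bool),
    Computable f ∧ Computable g ∧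
    ∀ (x : ℕ) (v : List ℕ),
      (∀ z, Out (g (x, v)) z → phi x v = Part.some (f z)) ∧
      ((phi x v).Dom → ∃ z, Out (g (x, v)) z)

/-- Universality with the standard output convention. -/
def Universal {m : ℕ} (P : SNP m) : Prop := UniversalVia P (Outputs P)

section Walks

variable {α : Type*}

def IsWalk (r : α → α → Prop) (p : ℕ → α) (n : ℕ) : Prop :=
  ∀ i < n, r (p i) (p (i + 1))

theorem exists_isWalk_lt_card {r : α → α → Prop} {S : Finset α} {n : ℕ} {p : ℕ → α}
    (hp : IsWalk r p n) (hS : ∀ i ≤ n, p i ∈ S) :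
    ∃ q m, IsWalk r q m ∧ q 0 = p 0 ∧ q m = p n ∧ m < S.card := by
  induction n using Nat.strong_induction_on generalizing p with
  | _ n ih =>
    by_cases hn : n < S.card
    · exact ⟨p, n, hp, rfl, rfl, hn⟩
    have hcard : S.card < (Finset.range (n + 1)).card := by rw [Finset.card_range]; omega
    obtain ⟨a, ha, b, hb, hab, heq⟩ := Finset.exists_ne_map_eq_of_card_lt_of_maps_to hcard
      fun i hi => hS i (Nat.lt_succ_iff.1 (Finset.mem_range.1 hi))
    wlog hlt : a < b generalizing a b
    · exact this b hb a ha hab.symm heq.symm (by omega)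
    simp only [Finset.mem_range] at ha hb
    set q : ℕ → α := fun i => if i < a then p i else p (i + (b - a))
    have hq_lt : ∀ i < a, q i = p i := fun i hi => if_pos hi
    have hq_ge : ∀ i, a ≤ i → q i = p (i + (b - a)) := fun i hi => if_neg (by omega)
    have hq : IsWalk r q (n - (b - a)) := fun i hi => by
      rcases Nat.lt_or_ge (i + 1) a with h | h
      · rw [hq_lt i (by omega), hq_lt _ h]; exact hp i (by omega)
      rcases Nat.lt_or_ge i a with h' | h'
      · rw [hq_lt i h', hq_ge _ h, show i + 1 + (b - a) = b by omega, ← heq,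
          show a = i + 1 by omega]
        exact hp i (by omega)
      · rw [hq_ge _ h', hq_ge _ h, show i + 1 + (b - a) = i + (b - a) + 1 by omega]
        exact hp _ (by omega)
    have hqS : ∀ i ≤ n - (b - a), q i ∈ S := fun i hi => by
      rcases Nat.lt_or_ge i a with h | h
      · rw [hq_lt i h]; exact hS i (by omega)
      · rw [hq_ge _ h]; exact hS _ (by omega)
    have hq0 : q 0 = p 0 := by
      rcases Nat.eq_zero_or_pos a with h | h
      · rw [hq_ge 0 (by omega), zero_add, show b - a = b by omega, ← heq, h]
      · exact hq_lt 0 h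
    have hqn : q (n - (b - a)) = p n := by
      rw [hq_ge _ (by omega), show n - (b - a) + (b - a) = n by omega]
    obtain ⟨q', m, hq', h0, hm, hlt'⟩ := ih (n - (b - a)) (by omega) hq hqS
    exact ⟨q', m, hq', h0.trans hq0, hm.trans hqn, hlt'⟩

def reachWithin (next : α → List α) (s : α) (n : ℕ) : List α :=
  (fun L => L ++ L.flatMap next)^[n] [s]

theorem mem_reachWithin {next : α → List α} {s b : α} {n : ℕ} :
    b ∈ reachWithin next s n ↔
      ∃ p m, m ≤ n ∧ IsWalk (fun a a' => a' ∈ next a) p m ∧ p 0 = s ∧ p m = b := by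
  induction n generalizing b with
  | zero =>
    simp only [reachWithin, Function.iterate_zero, id, List.mem_singleton, Nat.le_zero]
    constructor
    · rintro rfl; exact ⟨fun _ => b, 0, rfl, fun i hi => absurd hi (by omega), rfl, rfl⟩
    · rintro ⟨p, m, rfl, -, h0, hm⟩; rw [← hm, h0]
  | succ n ih =>
    simp only [reachWithin, Function.iterate_succ_apply'] at ih ⊢
    rw [List.mem_append, List.mem_flatMap, ih]
    constructor
    · rintro (⟨p, m, hm, hp, h0, rfl⟩ | ⟨a, ha, hb⟩)
      · exact ⟨p, m, by omega, hp, h0, rfl⟩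
      obtain ⟨p, m, hm, hp, h0, rfl⟩ := ih.1 ha
      refine ⟨fun i => if i ≤ m then p i else b, m + 1, by omega, fun i hi => ?_, by simpa,
        by simp⟩
      rcases Nat.lt_or_ge i m with h | h
      · simp only [if_pos h.le, if_pos (show i + 1 ≤ m by omega)]; exact hp i h
      · obtain rfl : i = m := by omega
        simpa using hb
    · rintro ⟨p, m, hm, hp, h0, rfl⟩
      rcases Nat.lt_or_ge m (n + 1) with h | h
      · exact Or.inl ⟨p, m, by omega, hp, h0, rfl⟩
      · obtain rfl : m = n + 1 := by omega
        exact Or.inr ⟨p n, ih.2 ⟨p, n, le_rfl, fun i hi => hp i (by omega), h0, rfl⟩,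
          hp n (by omega)⟩

theorem primrec_reachWithin [Primcodable α] {next : α → List α} (h : Primrec next) :
    Primrec₂ (reachWithin next) :=
  Primrec.nat_iterate Primrec.snd (Primrec.list_cons.comp Primrec.fst (Primrec.const []))
    (Primrec.list_append.comp Primrec.snd
      (Primrec.list_flatMap Primrec.snd (h.comp Primrec.snd).to₂)).to₂

end Walks

section PrimrecLemmas

theorem primrecPred_const {α : Type*} [Primcodable α] (Q : Prop) :
    PrimrecPred fun _ : α => Q :=
  (Primrec.const (decide Q)).primrecPred

theorem primrec_fin_sum {α : Type*} [Primcodable α] :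
    ∀ {m : ℕ} {f : Fin m → α → ℕ}, (∀ j, Primrec (f j)) →
      Primrec fun a => ∑ j, f j a
  | 0, _, _ => by simpa using Primrec.const 0
  | m + 1, f, hf => by
    simpa [Fin.sum_univ_succ] using
      Primrec.nat_add.comp (hf 0) (primrec_fin_sum fun j => hf j.succ)

theorem primrec_of_forall_apply {α σ : Type*} [Primcodable α] [Primcodable σ] {m : ℕ}
    {f : α → Fin m → σ} (hf : ∀ i, Primrec fun a => f a i) : Primrec f :=
  Primrec.fin_curry.2 (Primrec.fin_curry₁.2 hf).swap

theorem primrec_flatMap_const {α β σ : Type*} [Primcodable α] [Primcodable σ] (l : List β)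
    {f : β → α → List σ} (hf : ∀ b, Primrec (f b)) :
    Primrec fun a => l.flatMap (f · a) := by
  induction l with
  | nil => simpa using Primrec.const []
  | cons b l ih => simpa using Primrec.list_append.comp (hf b) ih

end PrimrecLemmas

section Events

theorem exists_two_le_count_iff {F : ℕ → Prop} :
    (∃ n, 2 ≤ Nat.count F n) ↔ ∃ t₁ t₂, t₁ < t₂ ∧ F t₁ ∧ F t₂ := by
  constructor
  · rintro ⟨n, hn⟩
    rw [Nat.count_eq_card_filter_range] at hn
    obtain ⟨a, ha, b, hb, hab⟩ := Finset.one_lt_card.1 hn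
    simp only [Finset.mem_filter] at ha hb
    rcases lt_or_gt_of_ne hab with h | h
    · exact ⟨a, b, h, ha.2, hb.2⟩
    · exact ⟨b, a, h, hb.2, ha.2⟩
  · rintro ⟨t₁, t₂, h, h₁, h₂⟩
    refine ⟨t₂ + 1, ?_⟩
    have := Nat.count_monotone F (show t₁ + 1 ≤ t₂ by omega)
    rw [Nat.count_succ, if_pos h₂]
    rw [Nat.count_succ, if_pos h₁] at this
    omega

theorem exists_outputIs_iff {F : ℕ → Prop} :
    (∃ z, OutputIs F z) ↔ ∃ t₁ t₂, t₁ < t₂ ∧ F t₁ ∧ F t₂ := by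
  constructor
  · rintro ⟨z, t₁, t₂, h, h₁, h₂, -⟩
    exact ⟨t₁, t₂, h, h₁, h₂⟩
  · rintro ⟨t₁, t₂, h, h₁, h₂⟩
    have hex₁ : ∃ t, F t := ⟨t₁, h₁⟩
    have hex₂ : ∃ t, F t ∧ Nat.find hex₁ < t :=
      ⟨t₂, h₂, (Nat.find_min' hex₁ h₁).trans_lt h⟩
    obtain ⟨hF₂, hlt⟩ := Nat.find_spec hex₂
    refine ⟨_, Nat.find hex₁, Nat.find hex₂, hlt, Nat.find_spec hex₁, hF₂,
      fun s hs hne hFs => ?_, rfl⟩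
    rcases lt_or_gt_of_ne hne with h | h
    · exact Nat.find_min hex₁ h hFs
    · exact Nat.find_min hex₂ hs ⟨hFs, h⟩

end Events

section UnaryRegular

theorem eq_spk_length (l : List Unit) : l = spk l.length :=
  List.eq_replicate_length.2 fun _ _ => rfl

theorem spk_mem_mul {L M : Language Unit} {n : ℕ} :
    spk n ∈ L * M ↔ ∃ k ≤ n, spk k ∈ L ∧ spk (n - k) ∈ M := by
  rw [Language.mem_mul]
  constructor
  · rintro ⟨a, ha, b, hb, hab⟩
    have hlen : a.length + b.length = n := by simpa [spk] using congrArg List.length hab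
    refine ⟨a.length, by omega, by rwa [← eq_spk_length], ?_⟩
    rwa [show n - a.length = b.length by omega, ← eq_spk_length]
  · rintro ⟨k, hk, h1, h2⟩
    refine ⟨spk k, h1, spk (n - k), h2, ?_⟩
    rw [spk, spk, ← List.replicate_add, Nat.add_sub_cancel' hk, spk]

theorem spk_mem_kstar {L : Language Unit} {n : ℕ} :
    spk n ∈ KStar.kstar L ↔
      n = 0 ∨ ∃ j, 1 ≤ j ∧ j ≤ n ∧ spk j ∈ L ∧ spk (n - j) ∈ KStar.kstar L := by
  constructor
  · intro h
    obtain ⟨S, hS, hmem⟩ := Language.mem_kstar_iff_exists_nonempty.1 h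
    cases S with
    | nil => exact Or.inl (by simpa [spk] using congrArg List.length hS)
    | cons y S =>
      have hy := hmem y List.mem_cons_self
      have hlen : y.length + S.flatten.length = n := by
        simpa [spk] using (congrArg List.length hS).symm
      refine Or.inr ⟨y.length, List.length_pos_iff.2 hy.2, by omega, ?_, ?_⟩
      · rw [← eq_spk_length]; exact hy.1
      · rw [show n - y.length = S.flatten.length by omega, ← eq_spk_length]
        exact Language.join_mem_kstar fun z hz => (hmem z (List.mem_cons_of_mem _ hz)).1
  · rintro (rfl | ⟨j, -, hjn, h1, h2⟩)
    · exact Language.nil_mem_kstar L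
    · rw [← Language.one_add_self_mul_kstar_eq_kstar]
      exact (Language.mem_add _ _ _).2 (Or.inr (spk_mem_mul.2 ⟨j, hjn, h1, h2⟩))

theorem primrecPred_spk_mem_matches (E : RegularExpression Unit) :
    PrimrecPred fun n => spk n ∈ E.matches' := by
  induction E with
  | zero => simpa [RegularExpression.matches'_zero] using primrecPred_const False
  | epsilon =>
    refine (Primrec.eq.comp Primrec.id (Primrec.const 0)).of_eq fun n => ?_
    simp [Language.mem_one, spk, List.replicate_eq_nil_iff]
  | char a =>
    refine (Primrec.eq.comp Primrec.id (Primrec.const 1)).of_eq fun n => ?_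
    show n = 1 ↔ spk n = [a]
    constructor
    · rintro rfl; rfl
    · intro h; simpa [spk] using congrArg List.length h
  | plus E F hE hF => exact (hE.or hF).of_eq fun n => (Language.mem_add _ _ _).symm
  | comp E F hE hF =>
    have hR : PrimrecRel fun k n => spk k ∈ E.matches' ∧ spk (n - k) ∈ F.matches' :=
      (hE.comp Primrec.fst).and (hF.comp (Primrec.nat_sub.comp Primrec.snd Primrec.fst))
    refine (hR.exists_lt.comp Primrec.succ Primrec.id).of_eq fun n => ?_
    show _ ↔ spk n ∈ E.matches' * F.matches'
    simp only [spk_mem_mul, id, Nat.lt_succ_iff]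
  | star E hE =>
    have hR : PrimrecRel fun (k : ℕ) (l : List Bool) =>
        spk (l.length - k) ∈ E.matches' ∧ l.getD k false = true :=
      (hE.comp (Primrec.nat_sub.comp (Primrec.list_length.comp Primrec.snd) Primrec.fst)).and
        (Primrec.eq.comp ((Primrec.list_getD false).comp Primrec.snd Primrec.fst)
          (Primrec.const true))
    have hg : PrimrecPred fun l : List Bool =>
        l.length = 0 ∨ ∃ k ∈ List.range l.length, spk (l.length - k) ∈ E.matches' ∧
          l.getD k false = true :=
      (Primrec.eq.comp Primrec.list_length (Primrec.const 0)).or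
        (hR.exists_mem_list.comp (Primrec.list_range.comp Primrec.list_length) Primrec.id)
    have := Primrec.nat_strong_rec (fun (_ : Unit) n => decide (spk n ∈ E.star.matches'))
      (Primrec.option_some.comp (hg.decide.comp Primrec.snd)).to₂ fun _ n => ?_
    · exact (this.comp (Primrec.const ()) Primrec.id).primrecPred
    have hget : ∀ k < n, ((List.range n).map fun k => decide (spk k ∈ E.star.matches')).getD k
        false = decide (spk k ∈ E.star.matches') := fun k hk => by
      rw [List.getD_eq_getElem?_getD, List.getElem?_map, List.getElem?_range hk]; rfl
    have key : spk n ∈ E.star.matches' ↔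
        n = 0 ∨ ∃ k < n, spk (n - k) ∈ E.matches' ∧ spk k ∈ E.star.matches' := by
      rw [RegularExpression.matches'_star, spk_mem_kstar]
      refine or_congr_right ⟨fun ⟨j, hj, hjn, h1, h2⟩ => ⟨n - j, by omega, ?_⟩,
        fun ⟨k, hk, h1, h2⟩ => ⟨n - k, by omega, by omega, h1, ?_⟩⟩
      · rw [show n - (n - j) = j by omega]; exact ⟨h1, h2⟩
      · rwa [show n - (n - k) = k by omega]
    simp only [List.length_map, List.length_range, Option.some.injEq, List.mem_range]
    refine decide_eq_decide.2 (key.trans (or_congr_right (exists_congr fun k =>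
      and_congr_right fun hk => and_congr_right fun _ => ?_))).symm
    rw [hget k hk, decide_eq_true_iff]

end UnaryRegular

section Runs

variable {m : ℕ} (P : SNP m)

theorem exists_actValid (i : Fin m) (c : ℕ) : ∃ a, ActValid P i c a := by
  by_cases hf : ∃ r, FireApp P i r c
  · obtain ⟨r, hr⟩ := hf
    exact ⟨some (Sum.inl r), hr⟩
  by_cases he : ∃ e, ForgetApp P i e c
  · obtain ⟨e, he⟩ := he
    exact ⟨some (Sum.inr e), he⟩
  simp only [not_exists] at hf he
  exact ⟨none, hf, he⟩

def SNP.stepConfig (c : Config m) (a : Fin m → Act) : Config m :=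
  ⟨fun i => c.sp i - consumed (a i) + received P a i + inputSpike P c.w i, c.w.tail⟩

def Run.ofPolicy (w : List Bool) (π : ℕ → Config m → Fin m → Act)
    (hπ : ∀ t c i, ActValid P i (c.sp i) (π t c i)) : Run P w where
  cfg t := Nat.rec (P.initConfig w) (fun t c => P.stepConfig c (π t c)) t
  act t := π t (Nat.rec (P.initConfig w) (fun t c => P.stepConfig c (π t c)) t)
  init_eq := rfl
  step _ := ⟨fun _ => hπ _ _ _, fun _ => rfl, rfl⟩

end Runs

section States

variable {m : ℕ} (P : SNP m)

def move (a : Act) : ℕ × ℕ := (consumed a, emitted a)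

/-- Spike counts, unread input, and the number of timesteps so far at which the output neuron
sent out exactly `x` spikes, capped at `2`. -/
abbrev State (m : ℕ) := (Fin m → ℕ) × List Bool × ℕ

noncomputable def SNP.stepState (x : ℕ) (s : State m) (mv : Fin m → ℕ × ℕ) : State m :=
  (fun i => s.1 i - (mv i).1 + ∑ j, (if (j, i) ∈ P.syn then (mv j).2 else 0) +
      inputSpike P s.2.1 i,
    s.2.1.tail,
    min 2 (s.2.2 + if (mv P.out).2 = x ∧ 0 < x then 1 else 0))

def SNP.Transition (x : ℕ) (s s' : State m) : Prop :=
  ∃ a : Fin m → Act,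
    (∀ i, ActValid P i (s.1 i) (a i)) ∧ s' = P.stepState x s (fun i => move (a i))

def SNP.startState (w : List Bool) : State m := (P.init, w, 0)

open Primrec in
theorem primrec_stepState (x : ℕ) : Primrec₂ (P.stepState x) := by
  have hmv : ∀ j, Primrec fun z : State m × (Fin m → ℕ × ℕ) => z.2 j :=
    fun j => fin_app.comp snd (const j)
  refine pair (primrec_of_forall_apply fun i => ?_)
    (pair (list_tail.comp (fst.comp (snd.comp fst))) (nat_min.comp (const 2)
      (nat_add.comp (snd.comp (snd.comp fst)) (ite ?_ (const 1) (const 0)))))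
  · refine nat_add.comp (nat_add.comp (nat_sub.comp (fin_app.comp (fst.comp fst) (const i))
      (fst.comp (hmv i))) (primrec_fin_sum fun j => ite (primrecPred_const _) (snd.comp (hmv j))
        (const 0))) (ite ((primrecPred_const _).and ?_) (const 1) (const 0))
    exact Primrec.eq.comp (list_head?.comp (fst.comp (snd.comp fst))) (const (some true))
  · exact (Primrec.eq.comp (snd.comp (hmv P.out)) (const x)).and
      (nat_lt.comp (const 0) (const x))

variable {P} {w : List Bool}

noncomputable def Run.state (ρ : Run P w) (x t : ℕ) : State m :=
  ((ρ.cfg t).sp, (ρ.cfg t).w, min 2 (Nat.count (fun t => SendsAt ρ t x) t))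

theorem Run.state_zero (ρ : Run P w) (x : ℕ) : ρ.state x 0 = P.startState w := by
  simp [Run.state, ρ.init_eq, SNP.initConfig, SNP.startState]

/-- Forgetting rules emit nothing and firing rules at least one spike, so `0 < x` singles out
the firings. -/
theorem emitted_eq_and_pos_iff (hWF : P.WF) {i : Fin m} {c : ℕ} {a : Act}
    (ha : ActValid P i c a) (x : ℕ) :
    emitted a = x ∧ 0 < x ↔ ∃ r, a = some (Sum.inl r) ∧ r.p = x := by
  match a with
  | none | some (Sum.inr _) =>
    exact ⟨fun ⟨h, hx⟩ => absurd h hx.ne, fun ⟨_, h, _⟩ => nomatch h⟩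
  | some (Sum.inl r) =>
    have := (hWF.2.2.2.1 i r ha.1).1
    simp only [emitted, Option.some.injEq, Sum.inl.injEq, exists_eq_left']
    omega

theorem Run.state_succ (hWF : P.WF) (ρ : Run P w) (x t : ℕ) :
    ρ.state x (t + 1) = P.stepState x (ρ.state x t) (fun i => move (ρ.act t i)) := by
  obtain ⟨hval, hsp, hw⟩ := ρ.step t
  have hsend := emitted_eq_and_pos_iff hWF (hval P.out) x
  simp only [Run.state, SNP.stepState, Prod.mk.injEq]
  refine ⟨funext fun i => hsp i, hw, ?_⟩
  have hif : (if SendsAt ρ t x then 1 else 0) =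
      if (move (ρ.act t P.out)).2 = x ∧ 0 < x then 1 else 0 := if_congr hsend.symm rfl rfl
  rw [Nat.count_succ, hif]
  split_ifs <;> omega

theorem Run.transition (hWF : P.WF) (ρ : Run P w) (x t : ℕ) :
    P.Transition x (ρ.state x t) (ρ.state x (t + 1)) :=
  ⟨ρ.act t, (ρ.step t).1, ρ.state_succ hWF x t⟩

theorem exists_run_of_isWalk (hWF : P.WF) {x n : ℕ} {p : ℕ → State m}
    (hp : IsWalk (P.Transition x) p n) (h0 : p 0 = P.startState w) :
    ∃ ρ : Run P w, ∀ t ≤ n, ρ.state x t = p t := by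
  have hp' : ∀ t, ∃ a : Fin m → Act, t < n → (∀ i, ActValid P i ((p t).1 i) (a i)) ∧
      p (t + 1) = P.stepState x (p t) (fun i => move (a i)) := fun t =>
    if ht : t < n then (hp t ht).imp fun _ h _ => h else ⟨fun _ => none, fun h => absurd h ht⟩
  choose A hA using hp'
  let π : ℕ → Config m → Fin m → Act := fun t c =>
    if ∀ i, ActValid P i (c.sp i) (A t i) then A t
    else fun i => (exists_actValid P i (c.sp i)).choose
  have hπ : ∀ t c i, ActValid P i (c.sp i) (π t c i) := fun t c i => by
    by_cases h : ∀ i, ActValid P i (c.sp i) (A t i)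
    · simp only [π, if_pos h]; exact h i
    · simp only [π, if_neg h]; exact (exists_actValid P i (c.sp i)).choose_spec
  let ρ := Run.ofPolicy P w π hπ
  refine ⟨ρ, fun t ht => ?_⟩
  induction t with
  | zero => rw [ρ.state_zero, h0]
  | succ t ih =>
    have hpt := ih (by omega)
    have hact : ρ.act t = A t := by
      have hcfg : (ρ.cfg t).sp = (p t).1 := congrArg Prod.fst hpt
      have hvalid : ∀ i, ActValid P i ((ρ.cfg t).sp i) (A t i) := by
        rw [hcfg]; exact (hA t (by omega)).1
      exact if_pos hvalid
    rw [ρ.state_succ hWF, hpt, hact, (hA t (by omega)).2]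

theorem exists_genOutputs_iff_isWalk (hWF : P.WF) (x : ℕ) :
    (∃ z, GenOutputs P x w z) ↔
      ∃ p n, IsWalk (P.Transition x) p n ∧ p 0 = P.startState w ∧ (p n).2.2 = 2 := by
  simp only [GenOutputs]
  rw [exists_comm]
  simp only [exists_outputIs_iff, ← exists_two_le_count_iff]
  constructor
  · rintro ⟨ρ, n, hn⟩
    refine ⟨ρ.state x, n, fun t _ => ρ.transition hWF x t, ρ.state_zero x, ?_⟩
    simp only [Run.state]
    omega
  · rintro ⟨p, n, hp, h0, hn⟩
    obtain ⟨ρ, hρ⟩ := exists_run_of_isWalk hWF hp h0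
    refine ⟨ρ, n, ?_⟩
    have := congrArg (·.2.2) (hρ n le_rfl)
    simp only [Run.state] at this
    omega

end States

section Moves

variable {m : ℕ} {P : SNP m}

theorem consumed_le {i : Fin m} {c : ℕ} {a : Act} (h : ActValid P i c a) :
    consumed a ≤ c := by
  match a with
  | none => exact Nat.zero_le c
  | some (Sum.inl _) => exact h.2.1
  | some (Sum.inr _) => exact h.2.ge

theorem emitted_le_consumed (hWF : P.WF) {i : Fin m} {c : ℕ} {a : Act}
    (h : ActValid P i c a) : emitted a ≤ consumed a := by
  match a with
  | none => exact le_rfl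
  | some (Sum.inl r) => exact (hWF.2.2.2.1 i r h.1).2
  | some (Sum.inr e) => exact Nat.zero_le e

theorem actValid_none_iff {i : Fin m} {c : ℕ} :
    ActValid P i c none ↔ ∀ ρ, ¬ ActValid P i c (some ρ) := by
  simp [ActValid, Sum.forall]

theorem primrecPred_actValid_some (i : Fin m) (ρ : FireRule ⊕ ℕ) :
    PrimrecPred fun c => ActValid P i c (some ρ) := by
  rcases ρ with r | e
  · exact (primrecPred_const _).and ((Primrec.nat_le.comp (Primrec.const r.b) Primrec.id).and
      (primrecPred_spk_mem_matches r.E))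
  · exact (primrecPred_const _).and (Primrec.eq.comp Primrec.id (Primrec.const e))

theorem exists_primrec_moves (hWF : P.WF) (i : Fin m) :
    ∃ L : ℕ → List (ℕ × ℕ), Primrec L ∧
      ∀ c mv, mv ∈ L c ↔ ∃ a, ActValid P i c a ∧ move a = mv := by
  set rules : List (FireRule ⊕ ℕ) := (hWF.2.1 i).toFinset.toList.map Sum.inl ++
    (hWF.2.2.1 i).toFinset.toList.map Sum.inr
  have hrules : ∀ c ρ, ActValid P i c (some ρ) → ρ ∈ rules := by
    rintro c (r | e) h
    · simpa [rules] using h.1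
    · simpa [rules] using h.1
  set app : ℕ → List (ℕ × ℕ) := fun c =>
    rules.flatMap fun ρ => if ActValid P i c (some ρ) then [move (some ρ)] else []
  have happ : ∀ c mv,
      mv ∈ app c ↔ ∃ ρ, ActValid P i c (some ρ) ∧ move (some ρ) = mv := by
    intro c mv
    simp only [app, List.mem_flatMap, List.mem_ite_nil_right, List.mem_singleton]
    exact ⟨fun ⟨ρ, _, h, he⟩ => ⟨ρ, h, he.symm⟩,
      fun ⟨ρ, h, he⟩ => ⟨ρ, hrules c ρ h, h, he.symm⟩⟩
  refine ⟨fun c => if app c = [] then [(0, 0)] else app c, ?_, fun c mv => ?_⟩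
  · have : Primrec app := primrec_flatMap_const rules fun ρ =>
      Primrec.ite (primrecPred_actValid_some i ρ) (Primrec.const _) (Primrec.const [])
    exact Primrec.ite (Primrec.eq.comp this (Primrec.const [])) (Primrec.const _) this
  show mv ∈ (if app c = [] then [(0, 0)] else app c) ↔ _
  by_cases h : app c = []
  · have hnone : ∀ ρ, ¬ ActValid P i c (some ρ) := fun ρ hρ =>
      List.ne_nil_of_mem ((happ c _).2 ⟨ρ, hρ, rfl⟩) h
    rw [if_pos h, List.mem_singleton]
    constructor
    · rintro rfl; exact ⟨none, actValid_none_iff.2 hnone, rfl⟩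
    · rintro ⟨_ | ρ, hρ, rfl⟩
      · rfl
      · exact absurd hρ (hnone ρ)
  · rw [if_neg h, happ]
    constructor
    · rintro ⟨ρ, hρ, rfl⟩; exact ⟨_, hρ, rfl⟩
    · rintro ⟨_ | ρ, hρ, rfl⟩
      · obtain ⟨mv, hmv⟩ := List.exists_mem_of_ne_nil _ h
        obtain ⟨ρ, hρ', -⟩ := (happ c mv).1 hmv
        exact absurd hρ' (actValid_none_iff.1 hρ ρ)
      · exact ⟨ρ, hρ, rfl⟩

end Moves

section TwoNeurons

variable (P : SNP 2)

theorem inputSpike_add_inputSpike_add_length_tail_le (w : List Bool) :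
    inputSpike P w 0 + inputSpike P w 1 + w.tail.length ≤ w.length := by
  have hinp : P.inp = 0 ∨ P.inp = 1 := by
    rcases P.inp with ⟨_ | _ | _, h⟩
    exacts [Or.inl rfl, Or.inr rfl, by omega]
  cases w with
  | nil => simp [inputSpike]
  | cons b w => rcases hinp with h | h <;> cases b <;> simp [inputSpike, h, add_comm]

def SNP.budget (w : List Bool) : ℕ := P.init 0 + P.init 1 + w.length

def SNP.stateBox (w : List Bool) : Finset (State 2) :=
  Fintype.piFinset (fun _ => Finset.range (P.budget w + 1)) ×ˢ w.tails.toFinset ×ˢ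
    Finset.range 3

def SNP.searchBound (w : List Bool) : ℕ := (P.budget w + 1) ^ 2 * ((w.length + 1) * 3)

theorem SNP.card_stateBox_le (w : List Bool) : (P.stateBox w).card ≤ P.searchBound w := by
  simp only [SNP.stateBox, SNP.searchBound, Finset.card_product, Fintype.card_piFinset,
    Finset.card_range, Finset.prod_const, Finset.card_univ, Fintype.card_fin]
  gcongr
  exact (List.toFinset_card_le _).trans (List.length_tails w).le

open Primrec in
theorem primrec_searchBound : Primrec P.searchBound := by
  have hb : Primrec fun w => P.budget w + 1 := succ.comp (nat_add.comp (const _) list_length)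
  refine (nat_mul.comp (nat_mul.comp hb hb)
    (nat_mul.comp (succ.comp list_length) (const 3))).of_eq fun w => ?_
  rw [SNP.searchBound, sq]

noncomputable def SNP.nextStates (x : ℕ) (L : Fin 2 → ℕ → List (ℕ × ℕ)) (s : State 2) :
    List (State 2) :=
  (L 0 (s.1 0)).flatMap fun mv₀ => (L 1 (s.1 1)).map fun mv₁ => P.stepState x s ![mv₀, mv₁]

variable {P} {x : ℕ} {w : List Bool}

theorem SNP.Transition.budget_le (hWF : P.WF) {s s' : State 2} (h : P.Transition x s s') :
    s'.1 0 + s'.1 1 + s'.2.1.length ≤ s.1 0 + s.1 1 + s.2.1.length := by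
  obtain ⟨a, ha, rfl⟩ := h
  have h00 : ((0 : Fin 2), (0 : Fin 2)) ∉ P.syn := fun h => hWF.1 _ h rfl
  have h11 : ((1 : Fin 2), (1 : Fin 2)) ∉ P.syn := fun h => hWF.1 _ h rfl
  have := inputSpike_add_inputSpike_add_length_tail_le P s.2.1
  have := consumed_le (ha 0)
  have := consumed_le (ha 1)
  have := emitted_le_consumed hWF (ha 0)
  have := emitted_le_consumed hWF (ha 1)
  simp only [SNP.stepState, Fin.sum_univ_two, move, if_neg h00, if_neg h11]
  split_ifs <;> omega

theorem mem_stateBox_of_isWalk (hWF : P.WF) {p : ℕ → State 2} {n : ℕ}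
    (hp : IsWalk (P.Transition x) p n) (h0 : p 0 = P.startState w) :
    ∀ i ≤ n, p i ∈ P.stateBox w := by
  have hinv : ∀ i ≤ n, (p i).1 0 + (p i).1 1 + (p i).2.1.length ≤ P.budget w ∧
      (p i).2.1 <:+ w ∧ (p i).2.2 ≤ 2 := by
    intro i hi
    induction i with
    | zero => simp [h0, SNP.startState, SNP.budget]
    | succ i ih =>
      obtain ⟨hb, hw, -⟩ := ih (by omega)
      have hbudget := (hp i (by omega)).budget_le hWF
      obtain ⟨a, -, hpa⟩ := hp i (by omega)
      rw [hpa] at hbudget ⊢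
      exact ⟨hbudget.trans hb, (List.tail_suffix _).trans hw, min_le_left _ _⟩
  intro i hi
  obtain ⟨hb, hw, hk⟩ := hinv i hi
  simp only [SNP.stateBox, Finset.mem_product, Fintype.mem_piFinset, Finset.mem_range,
    List.mem_toFinset, List.mem_tails]
  refine ⟨fun j => ?_, hw, by omega⟩
  fin_cases j
  exacts [by simp only [Fin.zero_eta]; omega, by simp only [Fin.mk_one]; omega]

theorem mem_nextStates {L : Fin 2 → ℕ → List (ℕ × ℕ)}
    (hL : ∀ i c mv, mv ∈ L i c ↔ ∃ a, ActValid P i c a ∧ move a = mv) {s s' : State 2} :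
    s' ∈ P.nextStates x L s ↔ P.Transition x s s' := by
  simp only [SNP.nextStates, List.mem_flatMap, List.mem_map, hL]
  constructor
  · rintro ⟨-, ⟨a₀, h₀, rfl⟩, -, ⟨a₁, h₁, rfl⟩, rfl⟩
    refine ⟨![a₀, a₁], fun i => ?_, congrArg _ (funext fun i => ?_)⟩ <;> fin_cases i
    exacts [h₀, h₁, rfl, rfl]
  · rintro ⟨a, ha, rfl⟩
    refine ⟨_, ⟨a 0, ha 0, rfl⟩, _, ⟨a 1, ha 1, rfl⟩, congrArg _ (funext fun i => ?_)⟩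
    fin_cases i <;> rfl

open Primrec in
theorem primrec_nextStates {L : Fin 2 → ℕ → List (ℕ × ℕ)} (hL : ∀ i, Primrec (L i)) :
    Primrec (P.nextStates x L) := by
  have hvec : Primrec₂ fun mv₀ mv₁ : ℕ × ℕ => ![mv₀, mv₁] :=
    primrec_of_forall_apply fun i => by
      fin_cases i
      exacts [Primrec.fst, Primrec.snd]
  exact list_flatMap ((hL 0).comp (fin_app.comp fst (const 0)))
    (list_map ((hL 1).comp (fin_app.comp (fst.comp fst) (const 1)))
      ((primrec_stepState P x).comp (fst.comp fst) (hvec.comp (snd.comp fst) snd)).to₂).to₂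

theorem exists_genOutputs_iff_mem_reachWithin (hWF : P.WF) {L : Fin 2 → ℕ → List (ℕ × ℕ)}
    (hL : ∀ i c mv, mv ∈ L i c ↔ ∃ a, ActValid P i c a ∧ move a = mv) :
    (∃ z, GenOutputs P x w z) ↔
      ∃ s ∈ reachWithin (P.nextStates x L) (P.startState w) (P.searchBound w), s.2.2 = 2 := by
  have hrel : (fun s s' => s' ∈ P.nextStates x L s) = P.Transition x :=
    funext₂ fun _ _ => propext (mem_nextStates hL)
  simp only [exists_genOutputs_iff_isWalk hWF, mem_reachWithin, hrel]
  constructor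
  · rintro ⟨p, n, hp, h0, hn⟩
    obtain ⟨q, k, hq, hq0, hqk, hk⟩ :=
      exists_isWalk_lt_card hp (mem_stateBox_of_isWalk hWF hp h0)
    exact ⟨q k, ⟨q, k, (hk.trans_le (P.card_stateBox_le w)).le, hq, hq0.trans h0, rfl⟩,
      hqk ▸ hn⟩
  · rintro ⟨-, ⟨p, n, -, hp, h0, rfl⟩, hn⟩
    exact ⟨p, n, hp, h0, hn⟩

open Primrec in
theorem computablePred_exists_genOutputs (hWF : P.WF) (x : ℕ) :
    ComputablePred fun w => ∃ z, GenOutputs P x w z := by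
  choose L hLp hL using exists_primrec_moves hWF
  refine (PrimrecPred.computablePred ?_).of_eq fun w =>
    (exists_genOutputs_iff_mem_reachWithin hWF hL).symm
  have hstart : Primrec P.startState := pair (const _) (pair Primrec.id (const 0))
  exact (PrimrecPred.exists_mem_list (Primrec.eq.comp (snd.comp snd) (const 2))).comp
    ((primrec_reachWithin (primrec_nextStates hLp)).comp hstart (primrec_searchBound P))

end TwoNeurons

theorem not_universalVia_of_computablePred {m : ℕ} {P : SNP m} {Out : List Bool → ℕ → Prop}
    (h : ComputablePred fun w => ∃ z, Out w z) : ¬ UniversalVia P Out := by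
  rintro ⟨f, g, -, hg, hspec⟩
  apply ComputablePred.halting_problem (Encodable.encode ([] : List ℕ))
  have hc : Computable fun c : Nat.Partrec.Code => g (Encodable.encode c, []) :=
    hg.comp (Computable.encode.pair (Computable.const []))
  refine (h.decide.comp hc).computablePred.of_eq fun c => ?_
  have hphi : phi (Encodable.encode c) [] = c.eval (Encodable.encode ([] : List ℕ)) := by
    rw [phi, Denumerable.ofNat_encode]
  rw [← hphi]
  exact ⟨fun ⟨z, hz⟩ => by rw [(hspec _ _).1 z hz]; trivial, (hspec _ _).2⟩

/-- There is no universal extended SN P system without delay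
having only 2 neurons, even with generalised input and generalised output. -/
theorem no_universal_two_neuron_SNP :
    ¬ ∃ (P : SNP 2) (x : ℕ), P.WF ∧ UniversalVia P (GenOutputs P x) := by
  rintro ⟨P, x, hWF, hU⟩
  exact not_universalVia_of_computablePred (computablePred_exists_genOutputs hWF x) hU

end PaperSNP
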